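/- arXiv:1507.00600 — 6 statements merged into one kernel-verified Lean document; each statement's English description precedes it below -/
import Mathlib

section
/- Let τ be a binary relation on words over an alphabet Σ, fix a language M, and let L ⊆ M be a τ-independent language. Then for every i ≥ 1, the language μ^i(L) is τ-independent and L ⊆ μ^i(L) ⊆ μ^{i+1}(L) ⊆ ind(L). -/
open Set

/-- Image of a language under a binary word relation: τ(X) = {y | ∃ x ∈ X, τ(x,y)}. -/
def img {α : Type*} (τ : List α → List α → Prop) (X : Set (List α)) : Set (List α) :=
  {y | ∃ x ∈ X, τ x y}

/-- Inverse image: τ⁻¹(X) = {y | ∃ x ∈ X, τ(y,x)}. -/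
def pre {α : Type*} (τ : List α → List α → Prop) (X : Set (List α)) : Set (List α) :=
  {y | ∃ x ∈ X, τ y x}

/-- ind(X) = M \ (τ(X) ∪ τ⁻¹(X)). -/
def ind {α : Type*} (τ : List α → List α → Prop) (M X : Set (List α)) : Set (List α) :=
  M \ (img τ X ∪ pre τ X)

/-- The max-min operator μ(X) = ind(X) \ τ⁻¹(ind(X)). -/
def mu {α : Type*} (τ : List α → List α → Prop) (M X : Set (List α)) : Set (List α) :=
  ind τ M X \ pre τ (ind τ M X)

/-- σ_X(A) = τ⁻¹(A) ∩ ind(X). -/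
def sig {α : Type*} (τ : List α → List α → Prop) (M X A : Set (List α)) : Set (List α) :=
  pre τ A ∩ ind τ M X

/-- Φ^*(A) = ⋃_{i≥0} Φ^i(A). -/
def opStar {α : Type*} (Φ : Set (List α) → Set (List α)) (A : Set (List α)) : Set (List α) :=
  ⋃ i : ℕ, Φ^[i] A

/-- Φ^+(A) = ⋃_{i≥1} Φ^i(A). -/
def opPlus {α : Type*} (Φ : Set (List α) → Set (List α)) (A : Set (List α)) : Set (List α) :=
  ⋃ i ≥ 1, Φ^[i] A

/-- Φ^∩(A) = ⋂_{i≥1} Φ^i(A). -/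
def opInter {α : Type*} (Φ : Set (List α) → Set (List α)) (A : Set (List α)) : Set (List α) :=
  ⋂ i ≥ 1, Φ^[i] A

/-- Φ^{≥k}(A) = ⋃_{i≥k} Φ^i(A). -/
def opGe {α : Type*} (Φ : Set (List α) → Set (List α)) (k : ℕ) (A : Set (List α)) : Set (List α) :=
  ⋃ i ≥ k, Φ^[i] A

/-- A language is τ-independent if τ(L) ∩ L = ∅. -/
def indep {α : Type*} (τ : List α → List α → Prop) (L : Set (List α)) : Prop :=
  img τ L ∩ L = ∅

/-- τ is smooth (relative to M) if σ_X^∩(ind(X)) ⊆ σ_X^*(μ(X)) for every language X. -/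
def smooth {α : Type*} (τ : List α → List α → Prop) (M : Set (List α)) : Prop :=
  ∀ X : Set (List α), opInter (sig τ M X) (ind τ M X) ⊆ opStar (sig τ M X) (mu τ M X)

/-- L is P_τ-maximal relative to M: L ⊆ M, L is τ-independent, and no word of M \ L
can be added to L keeping τ-independence. -/
def maximalIndep {α : Type*} (τ : List α → List α → Prop) (M L : Set (List α)) : Prop :=
  L ⊆ M ∧ indep τ L ∧ ∀ w ∈ M \ L, ¬ indep τ (L ∪ {w})

/-! `μ(X)` is always independent and contained in `M`, while an independent `X ⊆ M` satisfies
`X ⊆ μ(X)`. Hence the iterates of `μ` on `L` form an increasing chain of independent languages,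
and `μ(μ^i L) ⊆ ind(μ^i L) ⊆ ind(L)` because `ind` is antitone. -/

section MaxMin

variable {α : Type*} {τ : List α → List α → Prop} {M X : Set (List α)}

lemma indep_iff_forall_notMem_img : indep τ X ↔ ∀ x ∈ X, x ∉ img τ X := by
  simp only [indep, eq_empty_iff_forall_notMem, mem_inter_iff, not_and']

lemma ind_antitone (M : Set (List α)) : Antitone (ind τ M) := by
  intro X Y hXY z ⟨hzM, hz⟩
  refine ⟨hzM, fun hzXY => hz ?_⟩
  rcases hzXY with ⟨x, hx, hxz⟩ | ⟨x, hx, hzx⟩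
  · exact Or.inl ⟨x, hXY hx, hxz⟩
  · exact Or.inr ⟨x, hXY hx, hzx⟩

lemma mu_subset_ind : mu τ M X ⊆ ind τ M X := sdiff_subset

lemma mu_subset : mu τ M X ⊆ M := fun _ hx => hx.1.1

lemma indep_mu : indep τ (mu τ M X) := by
  rw [indep_iff_forall_notMem_img]
  rintro y hy ⟨x, hx, hxy⟩
  exact hx.2 ⟨y, hy.1, hxy⟩

lemma subset_ind_of_indep (hXM : X ⊆ M) (hX : indep τ X) : X ⊆ ind τ M X := by
  rw [indep_iff_forall_notMem_img] at hX
  rintro x hx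
  refine ⟨hXM hx, ?_⟩
  rintro (hxX | ⟨y, hy, hxy⟩)
  · exact hX x hx hxX
  · exact hX y hy ⟨x, hx, hxy⟩

lemma subset_mu_of_indep (hXM : X ⊆ M) (hX : indep τ X) : X ⊆ mu τ M X := by
  intro x hx
  refine ⟨subset_ind_of_indep hXM hX hx, ?_⟩
  rintro ⟨y, hy, hxy⟩
  exact hy.2 (Or.inl ⟨x, hx, hxy⟩)

lemma iterate_mu_subset_and_indep (hXM : X ⊆ M) (hX : indep τ X) (i : ℕ) :
    (mu τ M)^[i] X ⊆ M ∧ indep τ ((mu τ M)^[i] X) :=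
  Function.Iterate.rec (fun Y => Y ⊆ M ∧ indep τ Y) ⟨hXM, hX⟩
    (fun _ _ => ⟨mu_subset, indep_mu⟩) i

lemma monotone_iterate_mu (hXM : X ⊆ M) (hX : indep τ X) :
    Monotone fun i => (mu τ M)^[i] X := by
  refine monotone_nat_of_le_succ fun i => ?_
  obtain ⟨hM, hindep⟩ := iterate_mu_subset_and_indep hXM hX i
  rw [Function.iterate_succ_apply']
  exact subset_mu_of_indep hM hindep

end MaxMin

theorem stmt2 {α : Type*} (τ : List α → List α → Prop) (M L : Set (List α))
    (hLM : L ⊆ M) (hL : indep τ L) :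
    ∀ i : ℕ, 1 ≤ i →
      indep τ ((mu τ M)^[i] L) ∧
      L ⊆ (mu τ M)^[i] L ∧
      (mu τ M)^[i] L ⊆ (mu τ M)^[i+1] L ∧
      (mu τ M)^[i+1] L ⊆ ind τ M L := by
  intro i _
  have hmono := monotone_iterate_mu hLM hL
  have hL_sub : L ⊆ (mu τ M)^[i] L := hmono (Nat.zero_le i)
  refine ⟨(iterate_mu_subset_and_indep hLM hL i).2, hL_sub, hmono i.le_succ, ?_⟩
  rw [Function.iterate_succ_apply']
  exact mu_subset_ind.trans (ind_antitone M hL_sub)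
end

section
/- Let τ be a binary relation on words over an alphabet Σ and fix a language M. For every language X: ind(X) = σ_X^*(μ(X)) ∪ σ_X^∩(ind(X)). -/
open Set

section Unrolling

variable {β : Type*} {Φ : Set β → Set β}

theorem iterate_union_of_map_union (hΦ : ∀ A B, Φ (A ∪ B) = Φ A ∪ Φ B) (n : ℕ)
    (A B : Set β) : Φ^[n] (A ∪ B) = Φ^[n] A ∪ Φ^[n] B := by
  induction n with
  | zero => rfl
  | succ n ih => simp only [Function.iterate_succ_apply', ih, hΦ]

theorem eq_biUnion_iterate_union_iterate_of_eq_union (hΦ : ∀ A B, Φ (A ∪ B) = Φ A ∪ Φ B)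
    {A I : Set β} (hI : I = A ∪ Φ I) (n : ℕ) :
    I = (⋃ i < n, Φ^[i] A) ∪ Φ^[n] I := by
  induction n with
  | zero => simp
  | succ n ih =>
    have hstep : Φ^[n] I = Φ^[n] A ∪ Φ^[n + 1] I := by
      conv_lhs => rw [hI]
      rw [iterate_union_of_map_union hΦ, Function.iterate_succ_apply]
    calc I = (⋃ i < n, Φ^[i] A) ∪ Φ^[n] I := ih
      _ = (⋃ i < n + 1, Φ^[i] A) ∪ Φ^[n + 1] I := by
        rw [hstep, biUnion_lt_succ, union_assoc]

/-- An Arden-type unrolling of the equation `I = A ∪ Φ I`: a point of `I` either leaves the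
iterates `Φⁿ I` at some stage, and then it was produced from `A` in finitely many steps, or it
stays in all of them. -/
theorem eq_iUnion_iterate_union_iInter_iterate_of_eq_union
    (hΦ : ∀ A B, Φ (A ∪ B) = Φ A ∪ Φ B) {A I : Set β} (hI : I = A ∪ Φ I) :
    I = (⋃ i, Φ^[i] A) ∪ ⋂ i ≥ 1, Φ^[i] I := by
  have hdecomp := eq_biUnion_iterate_union_iterate_of_eq_union hΦ hI
  refine Subset.antisymm (fun w hw => ?_) (union_subset (iUnion_subset fun i => ?_) ?_)
  · by_cases hinter : w ∈ ⋂ i ≥ 1, Φ^[i] I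
    · exact Or.inr hinter
    · obtain ⟨n, -, hn⟩ : ∃ n ≥ 1, w ∉ Φ^[n] I := by simpa using hinter
      rw [hdecomp n] at hw
      obtain ⟨i, -, hi⟩ : ∃ i < n, w ∈ Φ^[i] A := by simpa [hn] using hw
      exact Or.inl (mem_iUnion.2 ⟨i, hi⟩)
  · intro w hw
    rw [hdecomp (i + 1)]
    exact Or.inl (mem_biUnion (Nat.lt_succ_self i) hw)
  · intro w hw
    rw [hdecomp 1]
    exact Or.inr (mem_iInter₂.1 hw 1 le_rfl)

end Unrolling

section Languages

variable {α : Type*} (τ : List α → List α → Prop) (M X : Set (List α))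

theorem pre_union (B C : Set (List α)) : pre τ (B ∪ C) = pre τ B ∪ pre τ C := by
  ext y
  simp only [pre, mem_ofPred_eq, mem_union]
  grind

theorem sig_union (B C : Set (List α)) :
    sig τ M X (B ∪ C) = sig τ M X B ∪ sig τ M X C := by
  simp only [sig, pre_union, union_inter_distrib_right]

theorem ind_eq_mu_union_sig_ind : ind τ M X = mu τ M X ∪ sig τ M X (ind τ M X) := by
  ext w
  simp only [mu, sig, mem_union, mem_sdiff, mem_inter_iff]
  tauto

end Languages

theorem stmt6 {α : Type*} (τ : List α → List α → Prop) (M : Set (List α))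
    (X : Set (List α)) :
    ind τ M X = opStar (sig τ M X) (mu τ M X) ∪ opInter (sig τ M X) (ind τ M X) :=
  eq_iUnion_iterate_union_iInter_iterate_of_eq_union (sig_union τ M X)
    (ind_eq_mu_union_sig_ind τ M X)
end

section
/- Let τ be a binary relation on words over an alphabet Σ and fix a language M. If the operator A ↦ τ⁻¹(A) is exhaustive, i.e., ⋂_{i≥1} (τ⁻¹)^i(X) = ∅ for every language X, then τ is smooth, i.e., σ_X^∩(ind(X)) ⊆ σ_X^*(μ(X)) for every language X. -/
open Set

/-! Let `Y = ind(X) \ σ_X^*(μ(X))`. A word of `Y` is not in `μ(X)`, so it has a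
`τ`-successor in `ind(X)`; that successor cannot lie in `σ_X^*(μ(X))`, since this set is closed
under `σ_X`. Hence `Y ⊆ τ⁻¹(Y)`, so `Y` lies in every iterate of `τ⁻¹` on `Y`, and exhaustiveness
forces `Y = ∅`. Finally `σ_X^∩(ind(X)) ⊆ σ_X(ind(X)) ⊆ ind(X)`. -/

section

variable {α : Type*}

theorem eq_empty_of_subset_of_opInter_eq_empty {Φ : Set (List α) → Set (List α)}
    (hΦ : Monotone Φ) {Y : Set (List α)} (hY : Y ⊆ Φ Y) (hexh : opInter Φ Y = ∅) : Y = ∅ :=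
  subset_eq_empty (subset_iInter₂ fun n _ => hΦ.monotone_iterate_of_le_map hY (Nat.zero_le n))
    hexh

theorem opInter_subset_apply {Φ : Set (List α) → Set (List α)} (A : Set (List α)) :
    opInter Φ A ⊆ Φ A :=
  biInter_subset_of_mem (show 1 ≥ 1 from le_rfl)

theorem subset_opStar (Φ : Set (List α) → Set (List α)) (A : Set (List α)) :
    A ⊆ opStar Φ A :=
  subset_iUnion (fun i => Φ^[i] A) 0

variable (τ : List α → List α → Prop) (M X : Set (List α))

theorem pre_mono : Monotone (pre τ) :=
  fun _ _ hAB _ ⟨x, hx, hyx⟩ => ⟨x, hAB hx, hyx⟩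

theorem sig_subset_ind (A : Set (List α)) : sig τ M X A ⊆ ind τ M X :=
  inter_subset_right

theorem sig_opStar_subset (A : Set (List α)) :
    sig τ M X (opStar (sig τ M X) A) ⊆ opStar (sig τ M X) A := by
  rintro w ⟨⟨v, hv, hwv⟩, hw⟩
  obtain ⟨k, hk⟩ := mem_iUnion.mp hv
  refine mem_iUnion.mpr ⟨k + 1, ?_⟩
  rw [Function.iterate_succ_apply']
  exact ⟨⟨v, hk, hwv⟩, hw⟩

theorem ind_diff_opStar_mu_subset_pre :
    ind τ M X \ opStar (sig τ M X) (mu τ M X) ⊆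
      pre τ (ind τ M X \ opStar (sig τ M X) (mu τ M X)) := by
  rintro w ⟨hwI, hwS⟩
  have hw_not_mu : w ∉ mu τ M X := fun h => hwS (subset_opStar _ _ h)
  obtain ⟨v, hvI, hwv⟩ : w ∈ pre τ (ind τ M X) := not_not.mp fun h => hw_not_mu ⟨hwI, h⟩
  exact ⟨v, ⟨hvI, fun hvS => hwS (sig_opStar_subset τ M X _ ⟨⟨v, hvS, hwv⟩, hwI⟩)⟩, hwv⟩

theorem ind_subset_opStar_mu (hexh : ∀ Y : Set (List α), opInter (pre τ) Y = ∅) :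
    ind τ M X ⊆ opStar (sig τ M X) (mu τ M X) :=
  sdiff_eq_empty.mp <|
    eq_empty_of_subset_of_opInter_eq_empty (pre_mono τ) (ind_diff_opStar_mu_subset_pre τ M X)
      (hexh _)

end

theorem stmt8 {α : Type*} (τ : List α → List α → Prop) (M : Set (List α))
    (hexh : ∀ X : Set (List α), opInter (pre τ) X = ∅) :
    smooth τ M := fun X =>
  (opInter_subset_apply _).trans <|
    (sig_subset_ind τ M X _).trans (ind_subset_opStar_mu τ M X hexh)
end

section
/- Let τ be an input-altering binary relation on words over an alphabet Σ, fix a language M, and let L ⊆ M be a τ-independent language. Then L is P_τ-maximal relative to M if and only if ind(L) ⊆ L. -/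
open Set

section

variable {α : Type*} {τ : List α → List α → Prop} {M L : Set (List α)}

theorem indep_iff : indep τ L ↔ ∀ x ∈ L, ∀ y ∈ L, ¬ τ x y := by
  simp only [indep, img, Set.eq_empty_iff_forall_notMem, Set.mem_inter_iff, Set.mem_ofPred_eq]
  grind

theorem indep_insert_iff {w : List α} :
    indep τ (insert w L) ↔ indep τ L ∧ ¬ τ w w ∧ w ∉ img τ L ∪ pre τ L := by
  simp only [indep_iff, img, pre, Set.forall_mem_insert, Set.mem_union, Set.mem_ofPred_eq]
  grind

theorem ind_subset_iff : ind τ M L ⊆ L ↔ ∀ w ∈ M \ L, w ∈ img τ L ∪ pre τ L := by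
  simp only [ind, Set.subset_def, Set.mem_sdiff]
  grind

end

theorem stmt12 {α : Type*} (τ : List α → List α → Prop) (M L : Set (List α))
    (halt : ∀ w : List α, ¬ τ w w) (hLM : L ⊆ M) (hL : indep τ L) :
    maximalIndep τ M L ↔ ind τ M L ⊆ L := by
  simp only [maximalIndep, ind_subset_iff, Set.union_singleton, indep_insert_iff, hLM, hL, halt,
    not_false_eq_true, true_and, not_not]
end

section
/- Let τ be an input-altering binary relation on words over an alphabet Σ, fix a language M, and let L ⊆ M be a τ-independent language that is P_τ-maximal relative to M. Then μ^i(L) = L for all i ≥ 1. -/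
open Set

/-!
Maximality forces `ind(L) = L`: a word of `M \ L` that is τ-related to no word of `L` could be
added to `L` without breaking independence (here one needs `τ` input-altering, so the new word is
not related to itself). Then `μ(L) = L \ τ⁻¹(L) = L` by independence, so `L` is a fixed point of `μ`.
-/

section

variable {α : Type*} {τ : List α → List α → Prop} {M L : Set (List α)}

lemma not_rel_of_indep (hL : indep τ L) {x y : List α} (hx : x ∈ L) (hy : y ∈ L) : ¬ τ x y :=
  fun hxy => (Set.eq_empty_iff_forall_notMem.mp hL) y ⟨⟨x, hx, hxy⟩, hy⟩

lemma indep_union_singleton {w : List α} (hww : ¬ τ w w) (hL : indep τ L)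
    (hw : w ∉ img τ L ∪ pre τ L) : indep τ (L ∪ {w}) := by
  refine Set.eq_empty_iff_forall_notMem.mpr ?_
  rintro y ⟨⟨x, hx, hxy⟩, hy⟩
  rcases hx with hx | rfl <;> rcases hy with hy | rfl
  · exact not_rel_of_indep hL hx hy hxy
  · exact hw (Or.inl ⟨x, hx, hxy⟩)
  · exact hw (Or.inr ⟨y, hy, hxy⟩)
  · exact hww hxy

lemma ind_eq_self_of_maximalIndep (halt : ∀ w : List α, ¬ τ w w) (hmax : maximalIndep τ M L) :
    ind τ M L = L := by
  obtain ⟨hLM, hL, hnot⟩ := hmax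
  ext w
  constructor
  · rintro ⟨hwM, hw⟩
    by_contra hwL
    exact hnot w ⟨hwM, hwL⟩ (indep_union_singleton (halt w) hL hw)
  · intro hwL
    refine ⟨hLM hwL, ?_⟩
    rintro (⟨x, hx, hxw⟩ | ⟨x, hx, hwx⟩)
    · exact not_rel_of_indep hL hx hwL hxw
    · exact not_rel_of_indep hL hwL hx hwx

lemma mu_eq_self_of_ind_eq_self (hL : indep τ L) (hind : ind τ M L = L) : mu τ M L = L := by
  rw [mu, hind]
  exact sdiff_eq_self_iff_disjoint.mpr <|
    Set.disjoint_left.mpr fun _ ⟨x, hx, hwx⟩ hwL => not_rel_of_indep hL hwL hx hwx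

end

theorem stmt13_general {α : Type*} (τ : List α → List α → Prop) (M L : Set (List α))
    (halt : ∀ w : List α, ¬ τ w w)
    (hmax : maximalIndep τ M L) :
    ∀ i : ℕ, 1 ≤ i → (mu τ M)^[i] L = L := by
  have hmu : mu τ M L = L :=
    mu_eq_self_of_ind_eq_self hmax.2.1 (ind_eq_self_of_maximalIndep halt hmax)
  exact fun i _ => Function.iterate_fixed hmu i

theorem stmt13 {α : Type*} (τ : List α → List α → Prop) (M L : Set (List α))
    (halt : ∀ w : List α, ¬ τ w w) (hLM : L ⊆ M) (hL : indep τ L)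
    (hmax : maximalIndep τ M L) :
    ∀ i : ℕ, 1 ≤ i → (mu τ M)^[i] L = L :=
  stmt13_general τ M L halt hmax
end

section
/- Let the alphabet be {0,1}, let M be the set of all words over {0,1}, and let τ be the binary relation on words with τ(x,y) if and only if y is a proper prefix of x, or there exist words u, v with x = u·1·v and y = u·0·v (i.e., y is obtained from x by substituting exactly one occurrence of 1 with 0). Then for every n ≥ 0, μ^n({1}) = {1} ∪ { 0·1^k·0 | 0 ≤ k ≤ n−1 }; consequently μ^{n+1}({1}) ≠ μ^n({1}) for every n ≥ 0, so the iterated operator μ^* does not converge finitely on the language {1}. -/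
open Set

/-- The relation of Theorem 9 (`Lemma lem:ex` setting): y is a proper prefix of x, or
y results from x by substituting exactly one occurrence of 1 (true) with 0 (false). -/
def tau19 : List Bool → List Bool → Prop :=
  fun x y => (y <+: x ∧ y ≠ x) ∨
    ∃ u v : List Bool, x = u ++ true :: v ∧ y = u ++ false :: v

/-!
Write `Xₙ = {1} ∪ {0 1ᵏ 0 | k < n}` (`stage n`). The set `ind(Xₙ)` contains `1`, every word
`0 1ᵏ 0` and every word `0 1ⁿ 0 s`, whereas `ε`, the words `1 v` with `v ≠ ε` and the words `0 1ʲ`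
with `j ≤ n` are τ-related to a word of `Xₙ`. Every word has one of the shapes `ε`, `1`, `1 c t`,
`0 1ʲ`, `0 1ʲ 0 s`, and among them only `1` and `0 1ᵏ 0` with `k ≤ n` survive in `μ(Xₙ)`:
`0 1ʲ⁺¹` drops to `0 1ʲ 0`, a word `0 1ʲ 0 s` with `s ≠ ε` to its prefix `0 1ʲ 0`, and `0 1ʲ 0`
with `j > n` to `0 1ⁿ 0 1ʲ⁻ⁿ⁻¹ 0` by flipping its `(n+1)`-st one, all of which lie in `ind(Xₙ)`.
Conversely the τ-successors of `1` and of `0 1ᵏ 0` with `k ≤ n` are `ε`, `0 1ʲ` with `j ≤ k`, and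
words `0 1ᵐ 0 1ᵗ 0` with `m < k`, none of which is in `ind(Xₙ)`. So `μ(Xₙ) = Xₙ₊₁`, and `0 1ⁿ 0`
separates `Xₙ₊₁` from `Xₙ`.
-/

open List

section IndependenceOperators

variable {α : Type*} {τ : List α → List α → Prop} {M X : Set (List α)} {x y : List α}

theorem mem_ind_iff : y ∈ ind τ M X ↔ y ∈ M ∧ ∀ x ∈ X, ¬τ x y ∧ ¬τ y x := by
  simp only [ind, img, pre, mem_sdiff, mem_union, mem_ofPred_eq]
  grind

theorem notMem_ind_of_mem_img (hy : y ∈ img τ X) : y ∉ ind τ M X := fun h => h.2 (Or.inl hy)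

theorem notMem_ind_of_mem_pre (hy : y ∈ pre τ X) : y ∉ ind τ M X := fun h => h.2 (Or.inr hy)

theorem mem_mu_iff : x ∈ mu τ M X ↔ x ∈ ind τ M X ∧ ∀ y, τ x y → y ∉ ind τ M X := by
  simp only [mu, pre, mem_sdiff, mem_ofPred_eq]
  grind

end IndependenceOperators

namespace List

variable {α : Type*}

theorem replicate_append_cons_inj {a b : α} (hab : a ≠ b) {k j : ℕ} {s t : List α} :
    replicate k a ++ b :: s = replicate j a ++ b :: t ↔ k = j ∧ s = t := by
  refine ⟨fun h => ?_, by rintro ⟨rfl, rfl⟩; rfl⟩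
  induction k generalizing j with
  | zero => cases j <;> simp_all [replicate_succ, hab.symm]
  | succ k ih => cases j <;> simp_all [replicate_succ]

theorem eq_replicate_or_replicate_append_cons (a : α) (l : List α) :
    (∃ j, l = replicate j a) ∨ ∃ j b s, b ≠ a ∧ l = replicate j a ++ b :: s := by
  induction l with
  | nil => exact Or.inl ⟨0, rfl⟩
  | cons c l ih =>
    by_cases hc : c = a
    · subst hc
      rcases ih with ⟨j, rfl⟩ | ⟨j, b, s, hb, rfl⟩
      · exact Or.inl ⟨j + 1, rfl⟩
      · exact Or.inr ⟨j + 1, b, s, hb, rfl⟩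
    · exact Or.inr ⟨0, c, l, hc, rfl⟩

end List

def zeroOnes (j : ℕ) : List Bool := false :: replicate j true

def zeroOnesZero (k : ℕ) : List Bool := false :: (replicate k true ++ [false])

def stage (n : ℕ) : Set (List Bool) := {[true]} ∪ {w | ∃ k < n, w = zeroOnesZero k}

theorem zeroOnes_succ (j : ℕ) : zeroOnes (j + 1) = zeroOnes j ++ [true] := by
  simp [zeroOnes, replicate_succ']

theorem zeroOnesZero_eq (k : ℕ) : zeroOnesZero k = zeroOnes k ++ [false] := by
  simp [zeroOnesZero, zeroOnes]

theorem length_zeroOnesZero (k : ℕ) : (zeroOnesZero k).length = k + 2 := by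
  simp [zeroOnesZero]

theorem count_true_zeroOnesZero (k : ℕ) : (zeroOnesZero k).count true = k := by
  simp [zeroOnesZero]

theorem zeroOnesZero_append_inj {k j : ℕ} {s t : List Bool} :
    zeroOnesZero k ++ s = zeroOnesZero j ++ t ↔ k = j ∧ s = t := by
  simpa [zeroOnesZero] using replicate_append_cons_inj (by decide : true ≠ false)

theorem word_cases (w : List Bool) :
    w = [] ∨ w = [true] ∨ (∃ c t, w = true :: c :: t) ∨ (∃ j, w = zeroOnes j) ∨
      ∃ j s, w = zeroOnesZero j ++ s := by
  rcases w with _ | ⟨_ | _, t⟩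
  · exact Or.inl rfl
  · rcases eq_replicate_or_replicate_append_cons true t with ⟨j, rfl⟩ | ⟨j, b, s, hb, rfl⟩
    · exact Or.inr <| Or.inr <| Or.inr <| Or.inl ⟨j, rfl⟩
    · rw [ne_eq, Bool.not_eq_true] at hb
      subst hb
      exact Or.inr <| Or.inr <| Or.inr <| Or.inr ⟨j, s, by simp [zeroOnesZero]⟩
  · rcases t with _ | ⟨c, t⟩
    · exact Or.inr (Or.inl rfl)
    · exact Or.inr <| Or.inr <| Or.inl ⟨c, t, rfl⟩

theorem tau19_append {x s : List Bool} (hs : s ≠ []) : tau19 (x ++ s) x :=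
  Or.inl ⟨prefix_append x s, by simpa using hs.symm⟩

theorem tau19_subst (u v : List Bool) : tau19 (u ++ true :: v) (u ++ false :: v) :=
  Or.inr ⟨u, v, rfl, rfl⟩

theorem tau19_singleton_true_iff {y : List Bool} : tau19 [true] y ↔ y = [] ∨ y = [false] := by
  constructor
  · rintro (⟨hp, hne⟩ | ⟨u, v, hx, rfl⟩)
    · simp_all [prefix_cons_iff]
    · rcases u with _ | ⟨a, u⟩ <;> simp_all
  · rintro (rfl | rfl)
    · exact tau19_append (x := []) (by simp)
    · exact tau19_subst [] []

theorem head?_eq_of_tau19_singleton_true {x : List Bool} (h : tau19 x [true]) :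
    x.head? = some true := by
  rcases h with ⟨⟨t, rfl⟩, -⟩ | ⟨u, v, -, hy⟩
  · rfl
  · rcases u with _ | ⟨a, u⟩ <;> simp_all

theorem eq_nil_or_zeroOnes_of_prefix_zeroOnesZero {k : ℕ} {y : List Bool}
    (hp : y <+: zeroOnesZero k) (hne : y ≠ zeroOnesZero k) :
    y = [] ∨ ∃ j ≤ k, y = zeroOnes j := by
  rcases prefix_cons_iff.1 hp with rfl | ⟨t, rfl, ht⟩
  · exact Or.inl rfl
  have hle : t.length ≤ k + 1 := by simpa using ht.length_le
  have hlen : t.length ≤ k := by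
    refine Nat.le_of_lt_succ (lt_of_le_of_ne hle fun h => hne ?_)
    exact congrArg (false :: ·) (ht.eq_of_length (by simpa using h))
  obtain ⟨j, hj, rfl⟩ := sublist_replicate_iff.1
    (prefix_of_prefix_length_le ht (prefix_append _ _) (by simpa using hlen)).sublist
  exact Or.inr ⟨j, hj, rfl⟩

theorem zeroOnesZero_eq_append_cons_true {k : ℕ} {u v : List Bool}
    (h : zeroOnesZero k = u ++ true :: v) :
    ∃ m t, m + t + 1 = k ∧ u = zeroOnes m ∧ v = replicate t true ++ [false] := by
  rcases u with _ | ⟨a, u⟩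
  · simp [zeroOnesZero] at h
  simp only [zeroOnesZero, cons_append, cons.injEq] at h
  obtain ⟨rfl, h⟩ := h
  rcases eq_nil_or_concat' v with rfl | ⟨v, b, rfl⟩
  · simpa using (append_inj' h rfl).2
  rw [← cons_append, ← append_assoc] at h
  obtain ⟨hrep, hb⟩ := append_inj' h rfl
  obtain rfl : b = false := by simpa using hb.symm
  obtain ⟨hk, hu, hv⟩ := append_eq_replicate_iff.1 hrep.symm
  simp only [length_cons, replicate_succ, cons.injEq, true_and] at hv
  refine ⟨u.length, v.length, by simpa [← add_assoc] using hk, ?_, ?_⟩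
  · rw [hu, zeroOnes, length_replicate]
  · rw [hv, length_replicate]

theorem tau19_zeroOnesZero_cases {k : ℕ} {y : List Bool} (h : tau19 (zeroOnesZero k) y) :
    y = [] ∨ (∃ j ≤ k, y = zeroOnes j) ∨
      ∃ m t, m + t + 1 = k ∧ y = zeroOnesZero m ++ (replicate t true ++ [false]) := by
  rcases h with ⟨hp, hne⟩ | ⟨u, v, hx, rfl⟩
  · exact (eq_nil_or_zeroOnes_of_prefix_zeroOnesZero hp hne).imp_right Or.inl
  · obtain ⟨m, t, hk, rfl, rfl⟩ := zeroOnesZero_eq_append_cons_true hx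
    exact Or.inr (Or.inr ⟨m, t, hk, by simp [zeroOnesZero, zeroOnes]⟩)

theorem not_tau19_zeroOnesZero_append {k j : ℕ} {s : List Bool} (h : s = [] ∨ k < j) :
    ¬tau19 (zeroOnesZero j ++ s) (zeroOnesZero k) := by
  rintro (⟨⟨t, ht⟩, hne⟩ | ⟨u, v, hx, hy⟩)
  · obtain ⟨rfl, rfl⟩ := zeroOnesZero_append_inj.1 ht
    rcases h with rfl | h
    · simp at hne
    · exact h.false
  · -- a substitution keeps the length and removes one `1`, so `s` would have more ones than letters
    have hlen : (zeroOnesZero j ++ s).length = (zeroOnesZero k).length := by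
      rw [hx, hy]; simp
    have hcount : (zeroOnesZero j ++ s).count true = (zeroOnesZero k).count true + 1 := by
      rw [hx, hy]; simp [count_append]; omega
    simp only [length_append, length_zeroOnesZero, count_append, count_true_zeroOnesZero]
      at hlen hcount
    have hs := count_le_length (a := true) (l := s)
    omega

theorem tau19_zeroOnes_succ (m : ℕ) : tau19 (zeroOnes (m + 1)) (zeroOnesZero m) := by
  rw [zeroOnes_succ, zeroOnesZero_eq]
  exact tau19_subst _ []

theorem tau19_zeroOnesZero_add (m t : ℕ) :
    tau19 (zeroOnesZero (m + t + 1)) (zeroOnesZero m ++ (replicate t true ++ [false])) := by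
  convert tau19_subst (zeroOnes m) (replicate t true ++ [false]) using 1 <;>
    simp [zeroOnesZero, zeroOnes, add_assoc, replicate_add, replicate_succ]

theorem singleton_true_mem_stage (n : ℕ) : [true] ∈ stage n := Or.inl rfl

theorem zeroOnesZero_mem_stage {k n : ℕ} (h : k < n) : zeroOnesZero k ∈ stage n :=
  Or.inr ⟨k, h, rfl⟩

theorem zeroOnesZero_notMem_stage (n : ℕ) : zeroOnesZero n ∉ stage n := by
  rintro (h | ⟨k, hk, h⟩)
  · simp [zeroOnesZero] at h
  · have := congrArg length h
    simp only [length_zeroOnesZero] at this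
    omega

theorem nil_notMem_ind (n : ℕ) : [] ∉ ind tau19 univ (stage n) :=
  notMem_ind_of_mem_img
    ⟨[true], singleton_true_mem_stage n, tau19_singleton_true_iff.2 (Or.inl rfl)⟩

theorem zeroOnes_notMem_ind {j n : ℕ} (h : j ≤ n) : zeroOnes j ∉ ind tau19 univ (stage n) := by
  rcases j with _ | m
  · exact notMem_ind_of_mem_img
      ⟨[true], singleton_true_mem_stage n, tau19_singleton_true_iff.2 (Or.inr rfl)⟩
  · exact notMem_ind_of_mem_pre
      ⟨zeroOnesZero m, zeroOnesZero_mem_stage h, tau19_zeroOnes_succ m⟩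

theorem singleton_true_mem_ind (n : ℕ) : [true] ∈ ind tau19 univ (stage n) := by
  refine mem_ind_iff.2 ⟨trivial, ?_⟩
  rintro x (rfl | ⟨k, -, rfl⟩)
  · simp [tau19_singleton_true_iff]
  · refine ⟨fun h => ?_, by simp [tau19_singleton_true_iff, zeroOnesZero]⟩
    simpa [zeroOnesZero] using head?_eq_of_tau19_singleton_true h

theorem zeroOnesZero_append_mem_ind {n j : ℕ} {s : List Bool} (h : s = [] ∨ n ≤ j) :
    zeroOnesZero j ++ s ∈ ind tau19 univ (stage n) := by
  refine mem_ind_iff.2 ⟨trivial, ?_⟩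
  rintro x (rfl | ⟨k, hk, rfl⟩)
  · refine ⟨by simp [tau19_singleton_true_iff, zeroOnesZero], fun h => ?_⟩
    simpa [zeroOnesZero] using head?_eq_of_tau19_singleton_true h
  refine ⟨fun hτ => ?_, not_tau19_zeroOnesZero_append (h.imp_right hk.trans_le)⟩
  rcases tau19_zeroOnesZero_cases hτ with hy | ⟨i, -, hy⟩ | ⟨m, t, hmt, hy⟩
  · simp [zeroOnesZero] at hy
  · simp only [zeroOnesZero, zeroOnes, cons_append, cons.injEq, true_and] at hy
    simpa using congrArg (false ∈ ·) hy
  · obtain ⟨rfl, rfl⟩ := zeroOnesZero_append_inj.1 hy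
    rcases h with h | h
    · simp at h
    · omega

theorem zeroOnesZero_mem_ind (n j : ℕ) : zeroOnesZero j ∈ ind tau19 univ (stage n) := by
  simpa using zeroOnesZero_append_mem_ind (n := n) (j := j) (s := []) (Or.inl rfl)

theorem mu_stage_subset (n : ℕ) : mu tau19 univ (stage n) ⊆ stage (n + 1) := by
  intro w hw
  obtain ⟨hind, hmax⟩ := mem_mu_iff.1 hw
  rcases word_cases w with rfl | rfl | ⟨c, t, rfl⟩ | ⟨j | m, rfl⟩ | ⟨j, _ | ⟨c, s⟩, rfl⟩
  · exact absurd hind (nil_notMem_ind n)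
  · exact singleton_true_mem_stage _
  · exact absurd hind <| notMem_ind_of_mem_pre
      ⟨[true], singleton_true_mem_stage n, tau19_append (x := [true]) (cons_ne_nil c t)⟩
  · exact absurd hind (zeroOnes_notMem_ind (Nat.zero_le n))
  · exact absurd (zeroOnesZero_mem_ind n m) (hmax _ (tau19_zeroOnes_succ m))
  · rw [append_nil] at hmax ⊢
    by_cases hj : j ≤ n
    · exact zeroOnesZero_mem_stage (Nat.lt_succ_of_le hj)
    obtain ⟨t, rfl⟩ : ∃ t, j = n + t + 1 := ⟨j - n - 1, by omega⟩
    exact absurd (zeroOnesZero_append_mem_ind (Or.inr le_rfl))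
      (hmax _ (tau19_zeroOnesZero_add n t))
  · exact absurd (zeroOnesZero_mem_ind n j) (hmax _ (tau19_append (cons_ne_nil c s)))

theorem stage_succ_subset_mu (n : ℕ) : stage (n + 1) ⊆ mu tau19 univ (stage n) := by
  rintro w (rfl | ⟨k, hk, rfl⟩)
  · refine mem_mu_iff.2 ⟨singleton_true_mem_ind n, fun y hy => ?_⟩
    rcases tau19_singleton_true_iff.1 hy with rfl | rfl
    · exact nil_notMem_ind n
    · exact zeroOnes_notMem_ind (Nat.zero_le n)
  · refine mem_mu_iff.2 ⟨zeroOnesZero_mem_ind n k, fun y hy => ?_⟩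
    rcases tau19_zeroOnesZero_cases hy with rfl | ⟨j, hj, rfl⟩ | ⟨m, t, hmt, rfl⟩
    · exact nil_notMem_ind n
    · exact zeroOnes_notMem_ind (by omega)
    · exact notMem_ind_of_mem_pre
        ⟨zeroOnesZero m, zeroOnesZero_mem_stage (by omega), tau19_append (by simp)⟩

theorem mu_stage (n : ℕ) : mu tau19 univ (stage n) = stage (n + 1) :=
  (mu_stage_subset n).antisymm (stage_succ_subset_mu n)

theorem iterate_mu_singleton_true (n : ℕ) : (mu tau19 univ)^[n] {[true]} = stage n := by
  induction n with
  | zero => simp [stage]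
  | succ n ih => rw [Function.iterate_succ_apply', ih, mu_stage]

theorem stmt19 :
    (∀ n : ℕ, (mu tau19 Set.univ)^[n] {[true]} =
      {[true]} ∪ {w : List Bool | ∃ k < n, w = false :: (List.replicate k true ++ [false])}) ∧
    (∀ n : ℕ, (mu tau19 Set.univ)^[n+1] {[true]} ≠ (mu tau19 Set.univ)^[n] {[true]}) := by
  refine ⟨iterate_mu_singleton_true, fun n h => ?_⟩
  rw [iterate_mu_singleton_true, iterate_mu_singleton_true] at h
  exact zeroOnesZero_notMem_stage n (h ▸ zeroOnesZero_mem_stage n.lt_succ_self)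
end
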